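/- arXiv:1909.02768 — 2 statements merged into one kernel-verified Lean document; each statement's English description precedes it below -/
import Mathlib

section
/- Let F ⊆ ℝⁿ be uniformly discrete, i.e., there exists δ > 0 such that for every x ∈ F, the ball B_δ(x) intersects F only in {x}. Let ⪰ be a reflexive, total, and transitive relation on F. Then there exists a continuous function g : ℝⁿ → ℝ such that for all x, y ∈ F, x ⪰ y if and only if g(x) ≥ g(y). -/
/-!
Uniform discreteness makes `F` closed, discrete and (being discrete in a second countable space)
countable. On a countable set a total preorder is represented by the weighted count
`u x = ∑ 2⁻ᵏ` over the indices `k` of an enumeration `e` with `x ⪰ e k`: by transitivity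
`x ⪰ y` makes every index counted for `y` counted for `x`, and if `x ⋡ y` then `y = e k` is
counted for `y` but not for `x`. Since `F` carries the
discrete topology, `u` is continuous on `F`, and Tietze's theorem extends it from the closed set `F`
to the whole space.
-/

open Set Metric

universe u v

section TsumIndicator

variable {ι : Type*} {f : ι → ℝ} {s t : Set ι}

theorem tsum_indicator_le_tsum_indicator (hf : Summable f) (hf₀ : 0 ≤ f) (hst : s ⊆ t) :
    ∑' i, s.indicator f i ≤ ∑' i, t.indicator f i :=
  (hf.indicator s).tsum_le_tsum (indicator_le_indicator_of_subset hst hf₀) (hf.indicator t)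

theorem tsum_indicator_lt_tsum_indicator (hf : Summable f) (hf₀ : 0 ≤ f) (hst : s ⊆ t) {i : ι}
    (hit : i ∈ t) (his : i ∉ s) (hi : 0 < f i) :
    ∑' k, s.indicator f k < ∑' k, t.indicator f k :=
  (hf.indicator s).tsum_lt_tsum (indicator_le_indicator_of_subset hst hf₀)
    (i := i) (by simpa [his, hit] using hi) (hf.indicator t)

end TsumIndicator

theorem Set.Countable.exists_real_le_iff {α : Type*} {s : Set α} (hs : s.Countable)
    {r : α → α → Prop} (htotal : ∀ x ∈ s, ∀ y ∈ s, r x y ∨ r y x)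
    (htrans : ∀ x ∈ s, ∀ y ∈ s, ∀ z ∈ s, r x y → r y z → r x z) :
    ∃ u : α → ℝ, ∀ x ∈ s, ∀ y ∈ s, (r x y ↔ u y ≤ u x) := by
  rcases s.eq_empty_or_nonempty with rfl | hne
  · exact ⟨0, by simp⟩
  obtain ⟨e, rfl⟩ := hs.exists_eq_range hne
  have hw : Summable fun k : ℕ => (1 / 2 : ℝ) ^ k := summable_geometric_two
  have hw₀ : 0 ≤ fun k : ℕ => (1 / 2 : ℝ) ^ k := fun k => by positivity
  have hupper : ∀ i j, r (e i) (e j) → {k | r (e j) (e k)} ⊆ {k | r (e i) (e k)} :=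
    fun i j hij k hjk => htrans _ ⟨i, rfl⟩ _ ⟨j, rfl⟩ _ ⟨k, rfl⟩ hij hjk
  refine ⟨fun x => ∑' k, {k | r x (e k)}.indicator (fun k => (1 / 2 : ℝ) ^ k) k, ?_⟩
  rintro _ ⟨i, rfl⟩ _ ⟨j, rfl⟩
  refine ⟨fun hij => tsum_indicator_le_tsum_indicator hw hw₀ (hupper i j hij), fun hle => ?_⟩
  by_contra hij
  have hji : r (e j) (e i) := (htotal _ ⟨i, rfl⟩ _ ⟨j, rfl⟩).resolve_left hij
  have hjj : r (e j) (e j) := (htotal _ ⟨j, rfl⟩ _ ⟨j, rfl⟩).elim id id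
  exact hle.not_gt <| tsum_indicator_lt_tsum_indicator hw hw₀ (hupper j i hji) (i := j) hjj hij
    (by positivity)

theorem Metric.pairwise_le_dist_of_ball_inter_eq_singleton {X : Type*} [PseudoMetricSpace X]
    {F : Set X} {δ : ℝ} (hF : ∀ x ∈ F, ball x δ ∩ F = {x}) :
    F.Pairwise fun x y => δ ≤ dist x y := by
  intro x hx y hy hxy
  by_contra! hlt
  have hy' : y ∈ ball x δ ∩ F := ⟨mem_ball'.2 hlt, hy⟩
  exact hxy (hF x hx ▸ hy').symm

theorem Set.countable_of_discreteTopology {X : Type*} [TopologicalSpace X]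
    [SecondCountableTopology X] (s : Set X) [DiscreteTopology s] : s.Countable :=
  countable_coe_iff.1 (TopologicalSpace.separableSpace_iff_countable.1 inferInstance)

theorem IsClosed.exists_continuous_eqOn_of_discreteTopology {X : Type u} {Y : Type v}
    [TopologicalSpace X] [NormalSpace X] [TopologicalSpace Y] [TietzeExtension.{u, v} Y]
    {F : Set X} (hF : IsClosed F) [DiscreteTopology F] (f : X → Y) : ∃ g : X → Y, Continuous g ∧ EqOn g f F := by
  obtain ⟨g, hg⟩ :=
    ContinuousMap.exists_restrict_eq hF ⟨F.domRestrict f, continuous_of_discreteTopology⟩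
  exact ⟨g, g.continuous, fun x hx => congr($hg ⟨x, hx⟩)⟩

theorem stmt_5_general {n : ℕ} (F : Set (EuclideanSpace ℝ (Fin n)))
    (δ : ℝ) (hδ : 0 < δ)
    (hdisc : ∀ x ∈ F, Metric.ball x δ ∩ F = {x})
    (succeq : EuclideanSpace ℝ (Fin n) → EuclideanSpace ℝ (Fin n) → Prop)
    (htotal : ∀ x ∈ F, ∀ y ∈ F, succeq x y ∨ succeq y x)
    (htrans : ∀ x ∈ F, ∀ y ∈ F, ∀ z ∈ F, succeq x y → succeq y z → succeq x z) :
    ∃ g : EuclideanSpace ℝ (Fin n) → ℝ, Continuous g ∧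
      ∀ x ∈ F, ∀ y ∈ F, (succeq x y ↔ g y ≤ g x) := by
  have hclosed : IsClosed F :=
    isClosed_of_pairwise_le_dist hδ (pairwise_le_dist_of_ball_inter_eq_singleton hdisc)
  have : DiscreteTopology F :=
    discreteTopology_subtype_iff'.2 fun x hx => ⟨_, isOpen_ball, hdisc x hx⟩
  obtain ⟨u, hu⟩ := (countable_of_discreteTopology F).exists_real_le_iff htotal htrans
  obtain ⟨g, hg, hgu⟩ := hclosed.exists_continuous_eqOn_of_discreteTopology u
  exact ⟨g, hg, fun x hx y hy => by rw [hgu hx, hgu hy]; exact hu x hx y hy⟩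

theorem stmt_5 {n : ℕ} (F : Set (EuclideanSpace ℝ (Fin n)))
    (δ : ℝ) (hδ : 0 < δ)
    (hdisc : ∀ x ∈ F, Metric.ball x δ ∩ F = {x})
    (succeq : EuclideanSpace ℝ (Fin n) → EuclideanSpace ℝ (Fin n) → Prop)
    (hrefl : ∀ x ∈ F, succeq x x)
    (htotal : ∀ x ∈ F, ∀ y ∈ F, succeq x y ∨ succeq y x)
    (htrans : ∀ x ∈ F, ∀ y ∈ F, ∀ z ∈ F, succeq x y → succeq y z → succeq x z) :
    ∃ g : EuclideanSpace ℝ (Fin n) → ℝ, Continuous g ∧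
      ∀ x ∈ F, ∀ y ∈ F, (succeq x y ↔ g y ≤ g x) :=
  stmt_5_general F δ hδ hdisc succeq htotal htrans
end

section
/- Let ⪰ be a reflexive, total, transitive relation on F ⊆ ℝⁿ with F convex and open, such that P_x = {y : ¬(x ⪰ y)} and N_x = {y : ¬(y ⪰ x)} are open for every x ∈ F, and suppose the quotient F/∼ (where x ∼ y ↔ x ⪰ y ∧ y ⪰ x) carries a metric d with d(∂_x, ∂_y) = inf{‖x' - y'‖ : x' ∈ ∂_x, y' ∈ ∂_y}. Then there exists a continuous function g : F → ℝ such that for all x, y ∈ F: x ⪰ y if and only if g(x) ≥ g(y). -/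
/-!
Fix `x₀ ∈ F` and let `g x = ±d(∂x, ∂x₀)`, the sign recording on which side of `x₀` the point
`x` lies. The key fact is that `d` is additive along chains: if `x ⪰ y ⪰ z`, a segment from a
point of `∂x` to a point of `∂z` lies in the convex set `F` and is connected, so it cannot be
covered by the disjoint open sets `{v | ¬ y ⪰ v}` and `{v | ¬ v ⪰ y}`; hence it meets `∂y`, and
splitting it there gives `d(∂x, ∂z) ≥ d(∂x, ∂y) + d(∂y, ∂z)`. Additivity turns `g x - g y` into
`d(∂x, ∂y) ≥ 0` whenever `x ⪰ y`, which yields the representation and, since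
`d(∂x, ∂y) ≤ ‖x - y‖`, the `1`-Lipschitz continuity of `g`.
-/

open Set

section SetDist

variable {E : Type*} [SeminormedAddCommGroup E]

noncomputable def setDist (s t : Set E) : ℝ :=
  sInf (image2 (fun a b => ‖a - b‖) s t)

lemma setDist_nonneg (s t : Set E) : 0 ≤ setDist s t :=
  Real.sInf_nonneg <| by rintro _ ⟨a, -, b, -, rfl⟩; exact norm_nonneg _

lemma setDist_le_norm_sub {s t : Set E} {a b : E} (ha : a ∈ s) (hb : b ∈ t) :
    setDist s t ≤ ‖a - b‖ :=
  csInf_le ⟨0, by rintro _ ⟨a, -, b, -, rfl⟩; exact norm_nonneg _⟩ (mem_image2_of_mem ha hb)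

lemma setDist_add_le_of_segment_inter [NormedSpace ℝ E] {s t u : Set E}
    (hs : s.Nonempty) (hu : u.Nonempty)
    (hseg : ∀ a ∈ s, ∀ c ∈ u, (segment ℝ a c ∩ t).Nonempty) :
    setDist s t + setDist t u ≤ setDist s u := by
  refine le_csInf (hs.image2 hu) ?_
  rintro _ ⟨a, ha, c, hc, rfl⟩
  obtain ⟨b, hb, hbt⟩ := hseg a ha c hc
  calc setDist s t + setDist t u ≤ ‖a - b‖ + ‖b - c‖ :=
        add_le_add (setDist_le_norm_sub ha hbt) (setDist_le_norm_sub hbt hc)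
    _ = ‖a - c‖ := by simpa only [dist_eq_norm] using dist_add_dist_of_mem_segment hb

end SetDist

lemma IsPreconnected.exists_mem_rel_and_rel {X : Type*} [TopologicalSpace X]
    {r : X → X → Prop} {F S : Set X} {y a c : X} (hS : IsPreconnected S) (hSF : S ⊆ F)
    (htotal : ∀ v ∈ F, r y v ∨ r v y)
    (hPopen : IsOpen {v | v ∈ F ∧ ¬ r y v}) (hNopen : IsOpen {v | v ∈ F ∧ ¬ r v y})
    (ha : a ∈ S) (hc : c ∈ S) (hay : r a y) (hyc : r y c) :
    ∃ b ∈ S, r y b ∧ r b y := by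
  by_contra! hno
  have hcover : S ⊆ {v | v ∈ F ∧ ¬ r y v} ∪ {v | v ∈ F ∧ ¬ r v y} := fun w hw => by
    by_cases hyw : r y w
    · exact Or.inr ⟨hSF hw, hno w hw hyw⟩
    · exact Or.inl ⟨hSF hw, hyw⟩
  obtain ⟨w, -, ⟨hwF, hyw⟩, -, hwy⟩ := hS _ _ hPopen hNopen hcover
    ⟨a, ha, hSF ha, fun hya => hno a ha hya hay⟩ ⟨c, hc, hSF hc, fun hcy => hno c hc hyc hcy⟩
  exact (htotal w hwF).elim hyw hwy

def indifferenceClass {α : Type*} (F : Set α) (r : α → α → Prop) (x : α) : Set α :=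
  {y | y ∈ F ∧ r x y ∧ r y x}

lemma setDist_indifferenceClass_add_le {E : Type*} [SeminormedAddCommGroup E] [NormedSpace ℝ E]
    {F : Set E} (hF : Convex ℝ F) {r : E → E → Prop}
    (hrefl : ∀ x ∈ F, r x x)
    (htotal : ∀ x ∈ F, ∀ y ∈ F, r x y ∨ r y x)
    (htrans : ∀ x ∈ F, ∀ y ∈ F, ∀ z ∈ F, r x y → r y z → r x z)
    (hPopen : ∀ x ∈ F, IsOpen {y | y ∈ F ∧ ¬ r x y})
    (hNopen : ∀ x ∈ F, IsOpen {y | y ∈ F ∧ ¬ r y x})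
    {x y z : E} (hx : x ∈ F) (hy : y ∈ F) (hz : z ∈ F) (hxy : r x y) (hyz : r y z) :
    setDist (indifferenceClass F r x) (indifferenceClass F r y) +
        setDist (indifferenceClass F r y) (indifferenceClass F r z) ≤
      setDist (indifferenceClass F r x) (indifferenceClass F r z) := by
  refine setDist_add_le_of_segment_inter ⟨x, hx, hrefl x hx, hrefl x hx⟩
    ⟨z, hz, hrefl z hz, hrefl z hz⟩ ?_
  rintro a ⟨haF, -, hax⟩ c ⟨hcF, hzc, -⟩
  have hsegF := hF.segment_subset haF hcF
  obtain ⟨b, hb, hyb, hby⟩ := (convex_segment a c).isPreconnected.exists_mem_rel_and_rel hsegF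
    (htotal y hy) (hPopen y hy) (hNopen y hy) (left_mem_segment ℝ a c)
    (right_mem_segment ℝ a c) (htrans a haF x hx y hy hax hxy) (htrans y hy z hz c hcF hyz hzc)
  exact ⟨b, hb, hsegF hb, hyb, hby⟩

open Classical in
noncomputable def signedDistFrom {α : Type*} (r : α → α → Prop) (d : α → α → ℝ) (x₀ x : α) :
    ℝ :=
  if r x x₀ then d x x₀ else -d x₀ x

section Chains

variable {α : Type*} {F : Set α} {r : α → α → Prop} {d : α → α → ℝ} {x₀ : α}

lemma signedDistFrom_sub_signedDistFrom
    (htotal : ∀ x ∈ F, ∀ y ∈ F, r x y ∨ r y x)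
    (htrans : ∀ x ∈ F, ∀ y ∈ F, ∀ z ∈ F, r x y → r y z → r x z)
    (hadd : ∀ x ∈ F, ∀ y ∈ F, ∀ z ∈ F, r x y → r y z → d x z = d x y + d y z)
    (hx₀ : x₀ ∈ F) {x y : α} (hx : x ∈ F) (hy : y ∈ F) (hxy : r x y) :
    signedDistFrom r d x₀ x - signedDistFrom r d x₀ y = d x y := by
  unfold signedDistFrom
  by_cases hyx₀ : r y x₀
  · rw [if_pos (htrans x hx y hy x₀ hx₀ hxy hyx₀), if_pos hyx₀, hadd x hx y hy x₀ hx₀ hxy hyx₀]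
    ring
  have hx₀y := (htotal y hy x₀ hx₀).resolve_left hyx₀
  by_cases hxx₀ : r x x₀
  · rw [if_pos hxx₀, if_neg hyx₀, hadd x hx x₀ hx₀ y hy hxx₀ hx₀y]
    ring
  · have hx₀x := (htotal x hx x₀ hx₀).resolve_left hxx₀
    rw [if_neg hxx₀, if_neg hyx₀, hadd x₀ hx₀ x hx y hy hx₀x hxy]
    ring

lemma rel_iff_signedDistFrom_le
    (htotal : ∀ x ∈ F, ∀ y ∈ F, r x y ∨ r y x)
    (htrans : ∀ x ∈ F, ∀ y ∈ F, ∀ z ∈ F, r x y → r y z → r x z)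
    (hadd : ∀ x ∈ F, ∀ y ∈ F, ∀ z ∈ F, r x y → r y z → d x z = d x y + d y z)
    (hnonneg : ∀ x ∈ F, ∀ y ∈ F, 0 ≤ d x y)
    (heq_zero : ∀ x ∈ F, ∀ y ∈ F, d x y = 0 → r y x)
    (hx₀ : x₀ ∈ F) {x y : α} (hx : x ∈ F) (hy : y ∈ F) :
    r x y ↔ signedDistFrom r d x₀ y ≤ signedDistFrom r d x₀ x := by
  refine ⟨fun hxy => ?_, fun hle => ?_⟩
  · have := signedDistFrom_sub_signedDistFrom htotal htrans hadd hx₀ hx hy hxy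
    linarith [hnonneg x hx y hy]
  · by_contra hxy
    have hyx := (htotal x hx y hy).resolve_left hxy
    have := signedDistFrom_sub_signedDistFrom htotal htrans hadd hx₀ hy hx hyx
    exact hxy (heq_zero y hy x hx (le_antisymm (by linarith) (hnonneg y hy x hx)))

lemma lipschitzOnWith_signedDistFrom [PseudoMetricSpace α]
    (htotal : ∀ x ∈ F, ∀ y ∈ F, r x y ∨ r y x)
    (htrans : ∀ x ∈ F, ∀ y ∈ F, ∀ z ∈ F, r x y → r y z → r x z)
    (hadd : ∀ x ∈ F, ∀ y ∈ F, ∀ z ∈ F, r x y → r y z → d x z = d x y + d y z)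
    (hnonneg : ∀ x ∈ F, ∀ y ∈ F, 0 ≤ d x y)
    (hle_dist : ∀ x ∈ F, ∀ y ∈ F, d x y ≤ dist x y) (hx₀ : x₀ ∈ F) :
    LipschitzOnWith 1 (signedDistFrom r d x₀) F := by
  refine LipschitzOnWith.of_le_add fun x hx y hy => ?_
  rcases htotal x hx y hy with hxy | hyx
  · linarith [signedDistFrom_sub_signedDistFrom htotal htrans hadd hx₀ hx hy hxy,
      hle_dist x hx y hy]
  · linarith [signedDistFrom_sub_signedDistFrom htotal htrans hadd hx₀ hy hx hyx,
      hnonneg y hy x hx, dist_nonneg (x := x) (y := y)]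

end Chains

theorem stmt_15_general {n : ℕ} (F : Set (EuclideanSpace ℝ (Fin n)))
    (hFconv : Convex ℝ F)
    (succeq : EuclideanSpace ℝ (Fin n) → EuclideanSpace ℝ (Fin n) → Prop)
    (hrefl : ∀ x ∈ F, succeq x x)
    (htotal : ∀ x ∈ F, ∀ y ∈ F, succeq x y ∨ succeq y x)
    (htrans : ∀ x ∈ F, ∀ y ∈ F, ∀ z ∈ F, succeq x y → succeq y z → succeq x z)
    (hPopen : ∀ x ∈ F, IsOpen {y | y ∈ F ∧ ¬ succeq x y})
    (hNopen : ∀ x ∈ F, IsOpen {y | y ∈ F ∧ ¬ succeq y x})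
    (cls : EuclideanSpace ℝ (Fin n) → Set (EuclideanSpace ℝ (Fin n)))
    (hcls : ∀ x, cls x = {y | y ∈ F ∧ succeq x y ∧ succeq y x})
    (d : EuclideanSpace ℝ (Fin n) → EuclideanSpace ℝ (Fin n) → ℝ)
    (hd_def : ∀ x ∈ F, ∀ y ∈ F,
      d x y = sInf (Set.image2 (fun a b => ‖a - b‖) (cls x) (cls y)))
    (hd_eq_zero : ∀ x ∈ F, ∀ y ∈ F, (d x y = 0 ↔ (succeq x y ∧ succeq y x)))
    (hd_triangle : ∀ x ∈ F, ∀ y ∈ F, ∀ z ∈ F, d x z ≤ d x y + d y z) :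
    ∃ g : EuclideanSpace ℝ (Fin n) → ℝ, ContinuousOn g F ∧
      ∀ x ∈ F, ∀ y ∈ F, (succeq x y ↔ g y ≤ g x) := by
  obtain rfl : cls = indifferenceClass F succeq := funext hcls
  rcases F.eq_empty_or_nonempty with rfl | ⟨x₀, hx₀⟩
  · exact ⟨0, continuousOn_const, by simp⟩
  have hd_nonneg : ∀ x ∈ F, ∀ y ∈ F, 0 ≤ d x y := fun x hx y hy => by
    rw [hd_def x hx y hy]
    exact setDist_nonneg _ _
  have hd_le_dist : ∀ x ∈ F, ∀ y ∈ F, d x y ≤ dist x y := fun x hx y hy => by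
    rw [hd_def x hx y hy, dist_eq_norm]
    exact setDist_le_norm_sub ⟨hx, hrefl x hx, hrefl x hx⟩ ⟨hy, hrefl y hy, hrefl y hy⟩
  have hd_add : ∀ x ∈ F, ∀ y ∈ F, ∀ z ∈ F, succeq x y → succeq y z → d x z = d x y + d y z :=
    fun x hx y hy z hz hxy hyz => (hd_triangle x hx y hy z hz).antisymm <| by
      rw [hd_def x hx y hy, hd_def y hy z hz, hd_def x hx z hz]
      exact setDist_indifferenceClass_add_le hFconv hrefl htotal htrans hPopen hNopen
        hx hy hz hxy hyz
  refine ⟨signedDistFrom succeq d x₀,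
    (lipschitzOnWith_signedDistFrom htotal htrans hd_add hd_nonneg hd_le_dist hx₀).continuousOn,
    fun x hx y hy => rel_iff_signedDistFrom_le htotal htrans hd_add hd_nonneg
      (fun x hx y hy h => ((hd_eq_zero x hx y hy).1 h).2) hx₀ hx hy⟩

theorem stmt_15 {n : ℕ} (F : Set (EuclideanSpace ℝ (Fin n)))
    (hFconv : Convex ℝ F) (hFopen : IsOpen F)
    (succeq : EuclideanSpace ℝ (Fin n) → EuclideanSpace ℝ (Fin n) → Prop)
    (hrefl : ∀ x ∈ F, succeq x x)
    (htotal : ∀ x ∈ F, ∀ y ∈ F, succeq x y ∨ succeq y x)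
    (htrans : ∀ x ∈ F, ∀ y ∈ F, ∀ z ∈ F, succeq x y → succeq y z → succeq x z)
    (hPopen : ∀ x ∈ F, IsOpen {y | y ∈ F ∧ ¬ succeq x y})
    (hNopen : ∀ x ∈ F, IsOpen {y | y ∈ F ∧ ¬ succeq y x})
    (cls : EuclideanSpace ℝ (Fin n) → Set (EuclideanSpace ℝ (Fin n)))
    (hcls : ∀ x, cls x = {y | y ∈ F ∧ succeq x y ∧ succeq y x})
    (d : EuclideanSpace ℝ (Fin n) → EuclideanSpace ℝ (Fin n) → ℝ)
    (hd_def : ∀ x ∈ F, ∀ y ∈ F,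
      d x y = sInf (Set.image2 (fun a b => ‖a - b‖) (cls x) (cls y)))
    (hd_symm : ∀ x ∈ F, ∀ y ∈ F, d x y = d y x)
    (hd_eq_zero : ∀ x ∈ F, ∀ y ∈ F, (d x y = 0 ↔ (succeq x y ∧ succeq y x)))
    (hd_triangle : ∀ x ∈ F, ∀ y ∈ F, ∀ z ∈ F, d x z ≤ d x y + d y z)
    (hd_nonneg : ∀ x ∈ F, ∀ y ∈ F, 0 ≤ d x y) :
    ∃ g : EuclideanSpace ℝ (Fin n) → ℝ, ContinuousOn g F ∧
      ∀ x ∈ F, ∀ y ∈ F, (succeq x y ↔ g y ≤ g x) :=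
  stmt_15_general F hFconv succeq hrefl htotal htrans hPopen hNopen cls hcls d hd_def hd_eq_zero
    hd_triangle
end
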